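/- For an irrational x₀ ∈ (0,1), for all n ≥ 1: θₙ₊₁ = θₙ₋₁ + ⌊(1 + √(1 − 4θₙ₋₁θₙ))/(2θₙ)⌋ · √(1 − 4θₙ₋₁θₙ) − ⌊(1 + √(1 − 4θₙ₋₁θₙ))/(2θₙ)⌋² · θₙ; i.e., θₙ₊₁ is determined explicitly by (θₙ₋₁, θₙ). -/

import Mathlib

noncomputable section

open Real

/-- The Gauss map `T x = 1/x - ⌊1/x⌋`. -/
def gauss (x : ℝ) : ℝ := 1 / x - ⌊1 / x⌋

/-- The future of `x₀` at time `n`: `xₙ = Tⁿ x₀`. -/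
def fut (x₀ : ℝ) (n : ℕ) : ℝ := gauss^[n] x₀

/-- The `n`-th partial quotient (digit) of `x₀` (meaningful for `n ≥ 1`):
`aₙ = ⌊1/xₙ₋₁⌋`. -/
def digit (x₀ : ℝ) (n : ℕ) : ℤ := ⌊1 / fut x₀ (n - 1)⌋

/-- Numerators of the continued fraction convergents of `x₀ ∈ (0,1)`. -/
def num (x₀ : ℝ) : ℕ → ℤ
  | 0 => 0
  | 1 => 1
  | (n + 2) => digit x₀ (n + 2) * num x₀ (n + 1) + num x₀ n

/-- Denominators of the continued fraction convergents of `x₀ ∈ (0,1)`. -/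
def den (x₀ : ℝ) : ℕ → ℤ
  | 0 => 1
  | 1 => digit x₀ 1
  | (n + 2) => digit x₀ (n + 2) * den x₀ (n + 1) + den x₀ n

/-- The `n`-th approximation coefficient `θₙ = qₙ² |x₀ - pₙ/qₙ|`. -/
def theta (x₀ : ℝ) (n : ℕ) : ℝ :=
  (den x₀ n : ℝ) ^ 2 * |x₀ - (num x₀ n : ℝ) / (den x₀ n : ℝ)|

/-- Finite continued fraction `[b₁,...,bₖ] = 1/(b₁ + 1/(⋯ + 1/bₖ))`, with `[∅] = 0`. -/
def fcf : List ℝ → ℝ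
  | [] => 0
  | (b :: bs) => 1 / (b + fcf bs)

/-- The past of `x₀` at time `n ≥ 1`: `yₙ = -aₙ - [aₙ₋₁, aₙ₋₂, ..., a₁]`. -/
def past (x₀ : ℝ) (n : ℕ) : ℝ :=
  -(digit x₀ n : ℝ) -
    fcf (((List.range (n - 1)).map fun i => ((digit x₀ (n - 1 - i) : ℤ) : ℝ)))

/-- The domain `Ω = (0,1) × (-∞,-1)`. -/
def Omega : Set (ℝ × ℝ) := Set.Ioo (0 : ℝ) 1 ×ˢ Set.Iio (-1 : ℝ)

/-- The open triangle `Γ` with vertices `(0,0)`, `(1,0)`, `(0,1)`. -/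
def Gam : Set (ℝ × ℝ) := {p | 0 < p.1 ∧ 0 < p.2 ∧ p.1 + p.2 < 1}

/-- The map `Ψ(x,y) = (1/(x-y), -xy/(x-y))`. -/
def Psi (p : ℝ × ℝ) : ℝ × ℝ := (1 / (p.1 - p.2), -(p.1 * p.2) / (p.1 - p.2))

/-- The map `Φ(u,v) = ((1-√(1-4uv))/(2u), -(1+√(1-4uv))/(2u))`. -/
def Phi (p : ℝ × ℝ) : ℝ × ℝ :=
  ((1 - Real.sqrt (1 - 4 * p.1 * p.2)) / (2 * p.1),
   -((1 + Real.sqrt (1 - 4 * p.1 * p.2)) / (2 * p.1)))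

/-- The natural extension map `𝒯(x,y) = (1/x - ⌊1/x⌋, 1/y - ⌊1/x⌋)`. -/
def natExt (p : ℝ × ℝ) : ℝ × ℝ := (1 / p.1 - ⌊1 / p.1⌋, 1 / p.2 - ⌊1 / p.1⌋)

/-!
Write `xₖ = Tᵏ x₀` for the Gauss orbit and `Bₙ = x₀ x₁ ⋯ xₙ`. Since `xₖ₊₁ = 1/xₖ - aₖ₊₁`, the
products satisfy the convergent recursion backwards, `Bₙ₊₂ = Bₙ - aₙ₊₂ Bₙ₊₁`, which gives
`qₙ x₀ - pₙ = (-1)ⁿ Bₙ`, hence `θₙ = qₙ Bₙ`, and `qₙ₊₁ Bₙ + qₙ Bₙ₊₁ = 1`. The latter turns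
`1 - 4 θₙ θₙ₊₁` into the square of `qₙ₊₁ Bₙ - qₙ Bₙ₊₁`, so that
`(1 + √(1 - 4 θₙ θₙ₊₁)) / (2 θₙ₊₁) = Bₙ / Bₙ₊₁ = 1 / xₙ₊₁`, whose floor is `aₙ₊₂`.
The recursion for `θₙ₊₂ = qₙ₊₂ Bₙ₊₂` is then a polynomial identity.
-/

lemma gauss_eq_fract (x : ℝ) : gauss x = Int.fract (1 / x) := rfl

lemma irrational_gauss {x : ℝ} (h : Irrational x) : Irrational (gauss x) := by
  rw [gauss, one_div]
  exact h.inv.sub_intCast _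

lemma gauss_mem_Ioo_of_irrational {x : ℝ} (h : Irrational x) : gauss x ∈ Set.Ioo 0 1 := by
  rw [gauss_eq_fract]
  refine ⟨Int.fract_pos.mpr ?_, Int.fract_lt_one _⟩
  rw [one_div]
  exact h.inv.ne_int _

lemma fut_zero (x₀ : ℝ) : fut x₀ 0 = x₀ := rfl

lemma fut_succ (x₀ : ℝ) (n : ℕ) : fut x₀ (n + 1) = gauss (fut x₀ n) :=
  Function.iterate_succ_apply' gauss n x₀

lemma fut_mem_Ioo {x₀ : ℝ} (hx : x₀ ∈ Set.Ioo (0 : ℝ) 1) (hirr : Irrational x₀) (n : ℕ) :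
    fut x₀ n ∈ Set.Ioo 0 1 := by
  have hirr_fut (k : ℕ) : Irrational (fut x₀ k) := by
    induction k with
    | zero => exact hirr
    | succ k ih => rw [fut_succ]; exact irrational_gauss ih
  cases n with
  | zero => exact hx
  | succ n => rw [fut_succ]; exact gauss_mem_Ioo_of_irrational (hirr_fut n)

lemma digit_succ (x₀ : ℝ) (n : ℕ) : digit x₀ (n + 1) = ⌊1 / fut x₀ n⌋ := rfl

lemma fut_succ_eq_inv_sub_digit (x₀ : ℝ) (n : ℕ) :
    fut x₀ (n + 1) = 1 / fut x₀ n - digit x₀ (n + 1) :=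
  fut_succ x₀ n

lemma den_add_two (x₀ : ℝ) (n : ℕ) :
    (den x₀ (n + 2) : ℝ) = digit x₀ (n + 2) * den x₀ (n + 1) + den x₀ n := by
  simp [den]

lemma num_add_two (x₀ : ℝ) (n : ℕ) :
    (num x₀ (n + 2) : ℝ) = digit x₀ (n + 2) * num x₀ (n + 1) + num x₀ n := by
  simp [num]

def futProd (x₀ : ℝ) (n : ℕ) : ℝ := ∏ k ∈ Finset.range (n + 1), fut x₀ k

lemma futProd_zero (x₀ : ℝ) : futProd x₀ 0 = x₀ := by simp [futProd, fut_zero]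

lemma futProd_succ (x₀ : ℝ) (n : ℕ) : futProd x₀ (n + 1) = futProd x₀ n * fut x₀ (n + 1) :=
  Finset.prod_range_succ _ _

section OrbitInUnitInterval

variable {x₀ : ℝ}

lemma one_le_digit_succ (h : ∀ k, fut x₀ k ∈ Set.Ioo 0 1) (n : ℕ) : 1 ≤ digit x₀ (n + 1) := by
  obtain ⟨h0, h1⟩ := h n
  rw [digit_succ, Int.le_floor, Int.cast_one, le_div_iff₀ h0]
  linarith

lemma one_le_den (h : ∀ k, fut x₀ k ∈ Set.Ioo 0 1) (n : ℕ) : (1 : ℝ) ≤ den x₀ n := by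
  induction n using Nat.twoStepInduction with
  | zero => simp [den]
  | one => exact_mod_cast one_le_digit_succ h 0
  | more n ih₀ ih₁ =>
    have ha : (1 : ℝ) ≤ digit x₀ (n + 2) := by exact_mod_cast one_le_digit_succ h (n + 1)
    rw [den_add_two]
    nlinarith

lemma den_le_den_succ (h : ∀ k, fut x₀ k ∈ Set.Ioo 0 1) (n : ℕ) :
    (den x₀ n : ℝ) ≤ den x₀ (n + 1) := by
  cases n with
  | zero => simpa [den] using (one_le_den h 1)
  | succ n =>
    have ha : (1 : ℝ) ≤ digit x₀ (n + 2) := by exact_mod_cast one_le_digit_succ h (n + 1)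
    have hq := one_le_den h n
    have hq' := one_le_den h (n + 1)
    rw [den_add_two]
    nlinarith

lemma futProd_pos (h : ∀ k, fut x₀ k ∈ Set.Ioo 0 1) (n : ℕ) : 0 < futProd x₀ n :=
  Finset.prod_pos fun k _ => (h k).1

lemma futProd_succ_lt (h : ∀ k, fut x₀ k ∈ Set.Ioo 0 1) (n : ℕ) :
    futProd x₀ (n + 1) < futProd x₀ n := by
  rw [futProd_succ]
  exact mul_lt_of_lt_one_right (futProd_pos h n) (h (n + 1)).2

lemma futProd_div_futProd_succ (h : ∀ k, fut x₀ k ∈ Set.Ioo 0 1) (n : ℕ) :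
    futProd x₀ n / futProd x₀ (n + 1) = 1 / fut x₀ (n + 1) := by
  have := futProd_pos h n
  rw [futProd_succ]
  field_simp

lemma futProd_add_two (h : ∀ k, fut x₀ k ∈ Set.Ioo 0 1) (n : ℕ) :
    futProd x₀ (n + 2) = futProd x₀ n - digit x₀ (n + 2) * futProd x₀ (n + 1) := by
  have := (h (n + 1)).1.ne'
  rw [futProd_succ x₀ (n + 1), futProd_succ x₀ n, fut_succ_eq_inv_sub_digit x₀ (n + 1)]
  field_simp

lemma den_mul_sub_num (h : ∀ k, fut x₀ k ∈ Set.Ioo 0 1) (n : ℕ) :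
    (den x₀ n : ℝ) * x₀ - num x₀ n = (-1) ^ n * futProd x₀ n := by
  induction n using Nat.twoStepInduction with
  | zero => simp [den, num, futProd_zero]
  | one =>
    have : x₀ ≠ 0 := (h 0).1.ne'
    simp only [den, num, futProd_succ, futProd_zero, fut_succ_eq_inv_sub_digit, fut_zero]
    field_simp
    ring
  | more n ih₀ ih₁ =>
    rw [den_add_two, num_add_two, futProd_add_two h]
    linear_combination (digit x₀ (n + 2) : ℝ) * ih₁ + ih₀

lemma den_succ_mul_futProd_add (h : ∀ k, fut x₀ k ∈ Set.Ioo 0 1) (n : ℕ) :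
    den x₀ (n + 1) * futProd x₀ n + den x₀ n * futProd x₀ (n + 1) = 1 := by
  induction n with
  | zero =>
    have : x₀ ≠ 0 := (h 0).1.ne'
    simp only [den, futProd_succ, futProd_zero, fut_succ_eq_inv_sub_digit, fut_zero]
    field_simp
    push_cast
    ring
  | succ n ih =>
    rw [den_add_two, futProd_add_two h]
    linear_combination ih

lemma theta_eq_den_mul_futProd (h : ∀ k, fut x₀ k ∈ Set.Ioo 0 1) (n : ℕ) :
    theta x₀ n = den x₀ n * futProd x₀ n := by
  have hq : (0 : ℝ) < den x₀ n := zero_lt_one.trans_le (one_le_den h n)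
  have hdiff : x₀ - num x₀ n / den x₀ n = (-1) ^ n * futProd x₀ n / den x₀ n := by
    rw [← den_mul_sub_num h]
    field_simp
  rw [theta, hdiff, abs_div, abs_mul, abs_pow, abs_neg, abs_one, one_pow, one_mul,
    abs_of_pos (futProd_pos h n), abs_of_pos hq]
  field_simp

lemma sqrt_one_sub_four_mul_theta_mul_theta (h : ∀ k, fut x₀ k ∈ Set.Ioo 0 1) (n : ℕ) :
    √(1 - 4 * theta x₀ n * theta x₀ (n + 1)) =
      den x₀ (n + 1) * futProd x₀ n - den x₀ n * futProd x₀ (n + 1) := by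
  have hone := den_succ_mul_futProd_add h n
  have hq := one_le_den h n
  have hqq := den_le_den_succ h n
  have hB := futProd_succ_lt h n
  have hB' := futProd_pos h (n + 1)
  rw [theta_eq_den_mul_futProd h, theta_eq_den_mul_futProd h]
  rw [show 1 - 4 * (den x₀ n * futProd x₀ n) * (den x₀ (n + 1) * futProd x₀ (n + 1)) =
      (den x₀ (n + 1) * futProd x₀ n - den x₀ n * futProd x₀ (n + 1)) ^ 2 by
    linear_combination (-(den x₀ (n + 1) * futProd x₀ n + den x₀ n * futProd x₀ (n + 1)) - 1) *
      hone]
  exact Real.sqrt_sq (by nlinarith)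

lemma floor_one_add_sqrt_div_theta (h : ∀ k, fut x₀ k ∈ Set.Ioo 0 1) (n : ℕ) :
    ⌊(1 + √(1 - 4 * theta x₀ n * theta x₀ (n + 1))) / (2 * theta x₀ (n + 1))⌋ =
      digit x₀ (n + 2) := by
  have hone := den_succ_mul_futProd_add h n
  have hq : (0 : ℝ) < den x₀ (n + 1) := zero_lt_one.trans_le (one_le_den h (n + 1))
  have hB := futProd_pos h (n + 1)
  have hquot : (1 + √(1 - 4 * theta x₀ n * theta x₀ (n + 1))) / (2 * theta x₀ (n + 1)) =
      futProd x₀ n / futProd x₀ (n + 1) := by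
    rw [sqrt_one_sub_four_mul_theta_mul_theta h, theta_eq_den_mul_futProd h,
      div_eq_div_iff (by positivity) hB.ne']
    linear_combination -futProd x₀ (n + 1) * hone
  rw [hquot, futProd_div_futProd_succ h]
  rfl

lemma theta_add_two (h : ∀ k, fut x₀ k ∈ Set.Ioo 0 1) (n : ℕ) :
    theta x₀ (n + 2) = theta x₀ n + digit x₀ (n + 2) * √(1 - 4 * theta x₀ n * theta x₀ (n + 1)) -
      (digit x₀ (n + 2) : ℝ) ^ 2 * theta x₀ (n + 1) := by
  rw [sqrt_one_sub_four_mul_theta_mul_theta h]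
  simp only [theta_eq_den_mul_futProd h]
  rw [den_add_two, futProd_add_two h]
  ring

end OrbitInUnitInterval

theorem stmt17 (x₀ : ℝ) (hx : x₀ ∈ Set.Ioo (0:ℝ) 1) (hirr : Irrational x₀)
    (n : ℕ) (hn : 1 ≤ n) :
    theta x₀ (n + 1) =
      theta x₀ (n - 1) +
        (⌊(1 + Real.sqrt (1 - 4 * theta x₀ (n - 1) * theta x₀ n)) / (2 * theta x₀ n)⌋ : ℝ) *
          Real.sqrt (1 - 4 * theta x₀ (n - 1) * theta x₀ n) -
        (⌊(1 + Real.sqrt (1 - 4 * theta x₀ (n - 1) * theta x₀ n)) / (2 * theta x₀ n)⌋ : ℝ) ^ 2 *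
          theta x₀ n := by
  have h := fut_mem_Ioo hx hirr
  obtain ⟨m, rfl⟩ : ∃ m, n = m + 1 := ⟨n - 1, (Nat.sub_add_cancel hn).symm⟩
  rw [Nat.add_sub_cancel, floor_one_add_sqrt_div_theta h]
  exact theta_add_two h m
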